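/- Let m ≥ 4 and let G(z,z̄) be a real-valued homogeneous polynomial of degree m in (z,z̄), i.e. G = Σ_{α+β=m} c_{αβ} z^α z̄^β with c_{βα} = conj(c_{αβ}). Then there exist unique holomorphic polynomials f(z,w) (weighted homogeneous of degree m−1 with wt z = 1, wt w = 2), g(z,w) (weighted homogeneous of degree m), and φ(z) (homogeneous of degree m in z) such that g(z,zz̄) − 2Re( z̄·f(z,zz̄) + φ(z) ) = G(z,z̄) identically in z, subject to the normalization that f is divisible by z² (i.e. f = z²·f* for some polynomial f*). -/
import Mathlib


open Complex Finset

/-- A function `ℂ × ℂ → ℂ` given by a holomorphic polynomial in two variables. -/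
def IsPolyFun2 (f : ℂ → ℂ → ℂ) : Prop :=
  ∃ p : MvPolynomial (Fin 2) ℂ, ∀ z w : ℂ, f z w = MvPolynomial.eval ![z, w] p

/-- A function `ℂ → ℂ` given by a holomorphic polynomial in one variable. -/
def IsPolyFun1 (φ : ℂ → ℂ) : Prop :=
  ∃ p : Polynomial ℂ, ∀ z : ℂ, φ z = p.eval z

lemma real_infinite : (Set.range (Complex.ofReal)).Infinite :=
  Set.infinite_range_of_injective Complex.ofReal_injective

lemma circle_infinite : {z : ℂ | z * (starRingEnd ℂ) z = 1}.Infinite := by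
  have hne : ∀ t : ℝ, (1 : ℂ) - t * I ≠ 0 := by
    intro t h
    have := congrArg Complex.re h
    simp at this
  apply Set.infinite_of_injective_forall_mem
    (f := fun t : ℝ => (1 + t * I) / (1 - t * I))
  case hi =>
    intro s t h
    rw [div_eq_div_iff (hne s) (hne t)] at h
    have h2 := congrArg Complex.im h
    simp [Complex.add_im, Complex.mul_im] at h2
    ring_nf at h2
    nlinarith [h2]
  case hf =>
    intro t
    simp only [Set.mem_setOf_eq]
    rw [map_div₀, map_add, map_mul, map_one, map_sub, map_one, map_mul]
    simp only [Complex.conj_ofReal, Complex.conj_I]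
    rw [div_mul_div_comm]
    have hne2 : (1:ℂ) + t * I ≠ 0 := by
      intro h; have := congrArg Complex.re h; simp at this
    rw [div_eq_one_iff_eq (mul_ne_zero (hne t)
      (by rw [show (1:ℂ) - ↑t * -I = 1 + ↑t*I by ring]; exact hne2))]
    ring

lemma vanish_on_infinite (s : Set ℂ) (hs : s.Infinite) (N : ℕ) (c : ℕ → ℂ)
    (h : ∀ z ∈ s, ∑ k ∈ range N, c k * z ^ k = 0) : ∀ k < N, c k = 0 := by
  intro k hk
  set p : Polynomial ℂ := ∑ k ∈ range N, Polynomial.C (c k) * Polynomial.X ^ k with hp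
  have hroot : ∀ z ∈ s, p.IsRoot z := by
    intro z hz
    have : p.eval z = ∑ k ∈ range N, c k * z ^ k := by
      simp [hp, Polynomial.eval_finset_sum]
    simpa [Polynomial.IsRoot, this] using h z hz
  have hp0 : p = 0 := Polynomial.eq_zero_of_infinite_isRoot p (hs.mono hroot)
  have : p.coeff k = c k := by
    rw [hp, Polynomial.finset_sum_coeff]
    simp only [Polynomial.coeff_C_mul, Polynomial.coeff_X_pow, mul_ite, mul_one, mul_zero]
    rw [Finset.sum_ite_eq (range N) k c]
    simp [hk]
  rw [← this, hp0]
  simp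

lemma sumCollapse {ι : Type*} (S : Finset ι) (A B : ι → ℕ) (c : ι → ℂ) (K : ℕ)
    (h : ∀ i ∈ S, A i < K ∧ B i < K) (z w : ℂ) :
    ∑ α ∈ range K, ∑ β ∈ range K,
      (∑ i ∈ S, if A i = α ∧ B i = β then c i else 0) * z ^ α * w ^ β
    = ∑ i ∈ S, c i * z ^ (A i) * w ^ (B i) := by
  have step1 : ∀ α β : ℕ,
      (∑ i ∈ S, if A i = α ∧ B i = β then c i else 0) * z ^ α * w ^ β
      = ∑ i ∈ S, if A i = α ∧ B i = β then c i * z ^ α * w ^ β else 0 := by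
    intro α β
    rw [Finset.sum_mul, Finset.sum_mul]
    refine Finset.sum_congr rfl fun i _ => ?_
    split_ifs with hc
    · rfl
    · simp
  simp only [step1]
  have comm1 : (∑ α ∈ range K, ∑ β ∈ range K, ∑ i ∈ S,
        if A i = α ∧ B i = β then c i * z ^ α * w ^ β else 0)
      = ∑ α ∈ range K, ∑ i ∈ S, ∑ β ∈ range K,
        if A i = α ∧ B i = β then c i * z ^ α * w ^ β else 0 :=
    Finset.sum_congr rfl fun α _ => Finset.sum_comm
  rw [comm1, Finset.sum_comm]
  refine Finset.sum_congr rfl fun i hi => ?_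
  obtain ⟨hA, hB⟩ := h i hi
  have : ∀ α, (∑ β ∈ range K, if A i = α ∧ B i = β then c i * z ^ α * w ^ β else 0)
      = if A i = α then c i * z ^ α * w ^ (B i) else 0 := by
    intro α
    simp only [ite_and]
    by_cases hα : A i = α
    · simp only [hα, if_pos rfl, if_true, eq_self_iff_true]
      rw [Finset.sum_ite_eq (range K) (B i) (fun x => c i * z ^ α * w ^ x)]
      simp [Finset.mem_range.mpr hB]
    · simp [hα]
  simp only [this]
  rw [Finset.sum_ite_eq (range K) (A i)]
  simp [Finset.mem_range.mpr hA]

lemma sumCollapse1 {ι : Type*} (S : Finset ι) (E : ι → ℕ) (c : ι → ℂ) (K : ℕ)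
    (h : ∀ i ∈ S, E i < K) (z : ℂ) :
    ∑ k ∈ range K, (∑ i ∈ S, if E i = k then c i else 0) * z ^ k
    = ∑ i ∈ S, c i * z ^ (E i) := by
  have step1 : ∀ k : ℕ,
      (∑ i ∈ S, if E i = k then c i else 0) * z ^ k
      = ∑ i ∈ S, if E i = k then c i * z ^ k else 0 := by
    intro k
    rw [Finset.sum_mul]
    refine Finset.sum_congr rfl fun i _ => ?_
    split_ifs with hc
    · rfl
    · simp
  simp only [step1]
  rw [Finset.sum_comm]
  refine Finset.sum_congr rfl fun i hi => ?_
  rw [Finset.sum_ite_eq (range K) (E i) (fun k => c i * z ^ k)]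
  simp [Finset.mem_range.mpr (h i hi)]

lemma vanish_univ (N : ℕ) (c : ℕ → ℂ)
    (h : ∀ z : ℂ, ∑ k ∈ range N, c k * z ^ k = 0) : ∀ k < N, c k = 0 :=
  vanish_on_infinite Set.univ Set.infinite_univ N c (fun z _ => h z)

lemma vanish2 (N : ℕ) (b : ℕ → ℕ → ℂ)
    (h : ∀ z w : ℂ, ∑ α ∈ range N, ∑ β ∈ range N, b α β * z ^ α * w ^ β = 0) :
    ∀ α < N, ∀ β < N, b α β = 0 := by
  intro α hα β hβ
  have h1 : ∀ w : ℂ, ∑ β ∈ range N, b α β * w ^ β = 0 := by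
    intro w
    refine vanish_univ N (fun α => ∑ β ∈ range N, b α β * w ^ β) (fun z => ?_) α hα
    rw [← h z w]
    refine Finset.sum_congr rfl fun α' _ => ?_
    rw [Finset.sum_mul]
    exact Finset.sum_congr rfl fun β' _ => by ring
  exact vanish_univ N (b α) h1 β hβ

lemma vanish_conj (N : ℕ) (b : ℕ → ℕ → ℂ)
    (h : ∀ z : ℂ, ∑ α ∈ range N, ∑ β ∈ range N,
        b α β * z ^ α * ((starRingEnd ℂ) z) ^ β = 0) :
    ∀ α < N, ∀ β < N, b α β = 0 := by
  intro α₀ hα₀ β₀ hβ₀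
  set S : Finset (ℕ × ℕ) := range N ×ˢ range N with hS
  have step1 : ∀ u : ℂ, ∀ k < 2*N, (∑ i ∈ S,
      if i.1 + i.2 = k then b i.1 i.2 * u ^ i.1 * ((starRingEnd ℂ) u) ^ i.2 else 0) = 0 := by
    intro u
    apply vanish_on_infinite _ real_infinite
    rintro z ⟨x, rfl⟩
    rw [sumCollapse1 S (fun i => i.1 + i.2)
      (fun i => b i.1 i.2 * u ^ i.1 * ((starRingEnd ℂ) u) ^ i.2) (2*N)
      (fun i hi => by
        rw [hS, Finset.mem_product, Finset.mem_range, Finset.mem_range] at hi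
        show i.1 + i.2 < 2*N
        omega)]
    have := h ((x : ℂ) * u)
    rw [show (starRingEnd ℂ) ((x:ℂ) * u) = (x:ℂ) * (starRingEnd ℂ) u by
      rw [map_mul, Complex.conj_ofReal]] at this
    rw [← this, Finset.sum_product]
    refine Finset.sum_congr rfl fun α _ => Finset.sum_congr rfl fun β _ => ?_
    rw [mul_pow, mul_pow, pow_add]
    ring
  have step2 : ∀ j < 2*N, (∑ i ∈ S,
      if i.1 + i.2 = α₀ + β₀ ∧ N + i.1 - i.2 = j then b i.1 i.2 else 0) = 0 := by
    apply vanish_on_infinite _ circle_infinite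
    intro u hu
    simp only [Set.mem_setOf_eq] at hu
    have hcoef : ∀ j, (∑ i ∈ S,
        if i.1 + i.2 = α₀ + β₀ ∧ N + i.1 - i.2 = j then b i.1 i.2 else 0)
        = ∑ i ∈ S, if N + i.1 - i.2 = j then
            (if i.1 + i.2 = α₀ + β₀ then b i.1 i.2 else 0) else 0 := by
      intro j
      refine Finset.sum_congr rfl fun i _ => ?_
      by_cases h1 : i.1 + i.2 = α₀ + β₀ <;> by_cases h2 : N + i.1 - i.2 = j <;>
        simp [h1, h2]
    simp only [hcoef]
    rw [sumCollapse1 S (fun i => N + i.1 - i.2)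
      (fun i => if i.1 + i.2 = α₀ + β₀ then b i.1 i.2 else 0) (2*N)
      (fun i hi => by
        rw [hS, Finset.mem_product, Finset.mem_range, Finset.mem_range] at hi
        show N + i.1 - i.2 < 2*N
        omega)]
    have hk : α₀ + β₀ < 2*N := by omega
    have h0 := step1 u (α₀ + β₀) hk
    calc ∑ i ∈ S, (if i.1 + i.2 = α₀ + β₀ then b i.1 i.2 else 0) * u ^ (N + i.1 - i.2)
        = ∑ i ∈ S, u^N * (if i.1 + i.2 = α₀ + β₀ then
            b i.1 i.2 * u ^ i.1 * ((starRingEnd ℂ) u) ^ i.2 else 0) := by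
          refine Finset.sum_congr rfl fun i hi => ?_
          rw [hS, Finset.mem_product, Finset.mem_range, Finset.mem_range] at hi
          split_ifs with hc
          · have e : N + i.1 = (N + i.1 - i.2) + i.2 := by omega
            calc (b i.1 i.2) * u ^ (N + i.1 - i.2)
                = b i.1 i.2 * u ^ (N + i.1 - i.2) * 1 ^ i.2 := by rw [one_pow, mul_one]
              _ = b i.1 i.2 * u ^ (N + i.1 - i.2) * (u * (starRingEnd ℂ) u) ^ i.2 := by
                  rw [hu]
              _ = u^N * (b i.1 i.2 * u ^ i.1 * ((starRingEnd ℂ) u) ^ i.2) := by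
                  rw [mul_pow]
                  have hpp : u ^ (N + i.1 - i.2) * u ^ i.2 = u ^ N * u ^ i.1 := by
                    rw [← pow_add, ← pow_add]; congr 1; omega
                  calc b i.1 i.2 * u ^ (N + i.1 - i.2) * (u ^ i.2 * ((starRingEnd ℂ) u) ^ i.2)
                      = b i.1 i.2 * (u ^ (N + i.1 - i.2) * u ^ i.2) * ((starRingEnd ℂ) u) ^ i.2 := by
                        ring
                    _ = b i.1 i.2 * (u ^ N * u ^ i.1) * ((starRingEnd ℂ) u) ^ i.2 := by rw [hpp]
                    _ = u^N * (b i.1 i.2 * u ^ i.1 * ((starRingEnd ℂ) u) ^ i.2) := by ring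
          · rw [mul_zero, zero_mul]
      _ = u^N * ∑ i ∈ S, (if i.1 + i.2 = α₀ + β₀ then
            b i.1 i.2 * u ^ i.1 * ((starRingEnd ℂ) u) ^ i.2 else 0) := by
          rw [Finset.mul_sum]
      _ = 0 := by rw [h0, mul_zero]
  have hj : N + α₀ - β₀ < 2*N := by omega
  have := step2 (N + α₀ - β₀) hj
  rw [Finset.sum_eq_single (α₀, β₀)] at this
  · rw [if_pos ⟨rfl, rfl⟩] at this
    exact this
  · intro i hi hne
    rw [hS, Finset.mem_product, Finset.mem_range, Finset.mem_range] at hi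
    rw [if_neg]
    rintro ⟨h1, h2⟩
    apply hne
    have : i.1 = α₀ ∧ i.2 = β₀ := by omega
    exact Prod.ext this.1 this.2
  · intro hmem
    exfalso
    exact hmem (by rw [hS, Finset.mem_product]; exact ⟨Finset.mem_range.mpr hα₀, Finset.mem_range.mpr hβ₀⟩)

lemma expand2 {f : ℂ → ℂ → ℂ} (hf : IsPolyFun2 f) :
    ∃ N : ℕ, ∃ B : ℕ → ℕ → ℂ, (∀ α β, N ≤ α ∨ N ≤ β → B α β = 0) ∧
      ∀ z w, f z w = ∑ α ∈ range N, ∑ β ∈ range N, B α β * z ^ α * w ^ β := by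
  obtain ⟨p, hp⟩ := hf
  set N := (p.support.sup fun s => max (s 0) (s 1)) + 1 with hN
  have hbound : ∀ s ∈ p.support, s 0 < N ∧ s 1 < N := by
    intro s hs
    have h1 : max (s 0) (s 1) ≤ p.support.sup fun s => max (s 0) (s 1) :=
      Finset.le_sup (f := fun s : Fin 2 →₀ ℕ => max (s 0) (s 1)) hs
    exact ⟨by have := le_trans (le_max_left (s 0) (s 1)) h1; omega,
      by have := le_trans (le_max_right (s 0) (s 1)) h1; omega⟩
  refine ⟨N, fun α β => ∑ s ∈ p.support,
      if s 0 = α ∧ s 1 = β then MvPolynomial.coeff s p else 0, ?_, ?_⟩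
  · intro α β hαβ
    apply Finset.sum_eq_zero
    intro s hs
    obtain ⟨h1, h2⟩ := hbound s hs
    rw [if_neg]
    rintro ⟨rfl, rfl⟩
    omega
  · intro z w
    rw [hp z w, sumCollapse p.support (fun s => s 0) (fun s => s 1)
      (fun s => MvPolynomial.coeff s p) N hbound z w]
    rw [MvPolynomial.eval_eq']
    refine Finset.sum_congr rfl fun s _ => ?_
    rw [Fin.prod_univ_two]
    simp [mul_assoc]

lemma homog_structure {f : ℂ → ℂ → ℂ} (d : ℕ) (hf : IsPolyFun2 f)
    (hh : ∀ lam z w : ℂ, f (lam * z) (lam ^ 2 * w) = lam ^ d * f z w) :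
    ∃ N : ℕ, ∃ b : ℕ → ℂ, (∀ j, 2*j > d ∨ N ≤ j → b j = 0) ∧
      ∀ z w, f z w = ∑ j ∈ range N, b j * z ^ (d - 2*j) * w ^ j := by
  obtain ⟨N, B, hB0, hB⟩ := expand2 hf
  have key : ∀ α β, α + 2*β ≠ d → B α β = 0 := by
    intro α β hne
    by_cases hαN : α < N
    case neg => exact hB0 α β (Or.inl (by omega))
    by_cases hβN : β < N
    case neg => exact hB0 α β (Or.inr (by omega))
    have h2 : ∀ z w : ℂ, ∑ α ∈ range N, ∑ β ∈ range N,
        (B α β * (2:ℂ) ^ (α + 2*β) - (2:ℂ) ^ d * B α β) * z ^ α * w ^ β = 0 := by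
      intro z w
      have hhh := hh 2 z w
      rw [hB, hB] at hhh
      have lhs_eq : ∑ α ∈ range N, ∑ β ∈ range N,
          B α β * ((2:ℂ) * z) ^ α * ((2:ℂ) ^ 2 * w) ^ β
          = ∑ α ∈ range N, ∑ β ∈ range N,
            (B α β * (2:ℂ) ^ (α + 2*β)) * z ^ α * w ^ β := by
        refine Finset.sum_congr rfl fun α' _ => Finset.sum_congr rfl fun β' _ => ?_
        rw [mul_pow, mul_pow, ← pow_mul, pow_add, pow_mul]
        ring
      rw [lhs_eq] at hhh
      have rhs_eq : (2:ℂ) ^ d * ∑ α ∈ range N, ∑ β ∈ range N, B α β * z ^ α * w ^ β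
          = ∑ α ∈ range N, ∑ β ∈ range N, ((2:ℂ) ^ d * B α β) * z ^ α * w ^ β := by
        rw [Finset.mul_sum]
        refine Finset.sum_congr rfl fun α' _ => ?_
        rw [Finset.mul_sum]
        exact Finset.sum_congr rfl fun β' _ => by ring
      rw [rhs_eq] at hhh
      calc ∑ α ∈ range N, ∑ β ∈ range N,
            (B α β * (2:ℂ)^(α+2*β) - (2:ℂ)^d * B α β) * z^α * w^β
          = (∑ α ∈ range N, ∑ β ∈ range N, B α β * (2:ℂ)^(α+2*β) * z^α * w^β)
            - ∑ α ∈ range N, ∑ β ∈ range N, (2:ℂ)^d * B α β * z^α * w^β := by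
            rw [← Finset.sum_sub_distrib]
            refine Finset.sum_congr rfl fun α' _ => ?_
            rw [← Finset.sum_sub_distrib]
            exact Finset.sum_congr rfl fun β' _ => by ring
        _ = 0 := by rw [hhh, sub_self]
    have hv := vanish2 N _ h2 α hαN β hβN
    have hne2 : (2:ℂ) ^ (α + 2*β) ≠ (2:ℂ) ^ d := by
      intro hc
      apply hne
      have h2n : (2:ℕ) ^ (α + 2*β) = 2 ^ d := by exact_mod_cast hc
      exact Nat.pow_right_injective (le_refl 2) h2n
    have : B α β * ((2:ℂ) ^ (α + 2*β) - (2:ℂ) ^ d) = 0 := by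
      rw [mul_sub]; rw [← hv]; ring
    rcases mul_eq_zero.mp this with h | h
    · exact h
    · exact absurd (sub_eq_zero.mp h) hne2
  refine ⟨N, fun j => B (d - 2*j) j, ?_, ?_⟩
  · intro j hj
    rcases hj with hj | hj
    · by_cases hc : (d - 2*j) + 2*j = d
      · omega
      · exact key _ _ hc
    · exact hB0 _ j (Or.inr hj)
  · intro z w
    rw [hB z w, Finset.sum_comm]
    refine Finset.sum_congr rfl fun β hβ => ?_
    rw [Finset.mem_range] at hβ
    rw [Finset.sum_eq_single (d - 2*β)]
    · intro α _ hne
      by_cases hc : α + 2*β = d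
      · omega
      · rw [key α β hc]; ring
    · intro hmem
      rw [Finset.mem_range, not_lt] at hmem
      rw [hB0 _ β (Or.inl hmem)]; ring

lemma fdiv_support {f : ℂ → ℂ → ℂ} {m N : ℕ} {b : ℕ → ℂ}
    (hb : ∀ j, 2*j > m - 1 ∨ N ≤ j → b j = 0)
    (hform : ∀ z w, f z w = ∑ j ∈ range N, b j * z ^ (m - 1 - 2*j) * w ^ j)
    (hdiv : ∃ fstar, IsPolyFun2 fstar ∧ ∀ z w : ℂ, f z w = z ^ 2 * fstar z w) :
    ∀ j, 2*j + 3 > m → b j = 0 := by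
  obtain ⟨fs, hfs, hzz⟩ := hdiv
  obtain ⟨N', B, hB0, hB⟩ := expand2 hfs
  set K := N + N' + m + 3 with hK
  set S' : Finset (ℕ × ℕ) := range N' ×ˢ range N' with hS'
  have hId : ∀ z w : ℂ, ∑ α ∈ range K, ∑ β ∈ range K,
      ((∑ j ∈ range N, if m - 1 - 2*j = α ∧ j = β then b j else 0)
        - (∑ i ∈ S', if i.1 + 2 = α ∧ i.2 = β then B i.1 i.2 else 0)) * z ^ α * w ^ β = 0 := by
    intro z w
    have split : ∀ α β : ℕ,
        ((∑ j ∈ range N, if m - 1 - 2*j = α ∧ j = β then b j else 0)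
          - (∑ i ∈ S', if i.1 + 2 = α ∧ i.2 = β then B i.1 i.2 else 0)) * z ^ α * w ^ β
        = (∑ j ∈ range N, if m - 1 - 2*j = α ∧ j = β then b j else 0) * z ^ α * w ^ β
          - (∑ i ∈ S', if i.1 + 2 = α ∧ i.2 = β then B i.1 i.2 else 0) * z ^ α * w ^ β := by
      intro α β; ring
    simp only [split]
    simp only [Finset.sum_sub_distrib]
    rw [show (∑ α ∈ range K, ∑ β ∈ range K,
          (∑ j ∈ range N, if m - 1 - 2*j = α ∧ j = β then b j else 0) * z ^ α * w ^ β)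
        = ∑ j ∈ range N, b j * z ^ (m - 1 - 2*j) * w ^ j from
      sumCollapse (range N) (fun j => m - 1 - 2*j) (fun j => j) b K
        (fun j hj => by rw [Finset.mem_range] at hj; exact ⟨show m - 1 - 2*j < K by omega, show j < K by omega⟩) z w]
    rw [show (∑ α ∈ range K, ∑ β ∈ range K,
          (∑ i ∈ S', if i.1 + 2 = α ∧ i.2 = β then B i.1 i.2 else 0) * z ^ α * w ^ β)
        = ∑ i ∈ S', B i.1 i.2 * z ^ (i.1 + 2) * w ^ i.2 from
      sumCollapse S' (fun i => i.1 + 2) (fun i => i.2) (fun i => B i.1 i.2) K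
        (fun i hi => by
          rw [hS', Finset.mem_product, Finset.mem_range, Finset.mem_range] at hi
          exact ⟨by show i.1 + 2 < K; omega, by show i.2 < K; omega⟩) z w]
    rw [← hform z w]
    rw [show (∑ i ∈ S', B i.1 i.2 * z ^ (i.1 + 2) * w ^ i.2) = z ^ 2 * fs z w by
      rw [hB z w, ← Finset.sum_product', Finset.mul_sum]
      refine Finset.sum_congr rfl fun i _ => ?_
      rw [pow_add]; ring]
    rw [← hzz z w, sub_self]
  have hC := vanish2 K _ hId
  intro j hj
  by_cases hjN : j < N
  case neg => exact hb j (Or.inr (by omega))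
  by_cases h2j : 2*j > m - 1
  case pos => exact hb j (Or.inl h2j)
  have hα : m - 1 - 2*j < 2 := by omega
  have := hC (m - 1 - 2*j) (by omega) j (by omega)
  rw [Finset.sum_eq_single j] at this
  · rw [if_pos ⟨rfl, rfl⟩] at this
    rw [show (∑ i ∈ S', if i.1 + 2 = m - 1 - 2*j ∧ i.2 = j then B i.1 i.2 else 0) = 0 from
      Finset.sum_eq_zero fun i _ => if_neg (by rintro ⟨h1, h2⟩; omega)] at this
    rw [sub_zero] at this
    exact this
  · intro j' _ hne
    exact if_neg (by rintro ⟨h1, h2⟩; exact hne h2)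
  · intro hmem
    exact absurd (Finset.mem_range.mpr hjN) hmem

lemma moser_uniq (m : ℕ) (hm : 4 ≤ m) (R : ℂ → ℂ)
    (f₁ g₁ : ℂ → ℂ → ℂ) (φ₁ : ℂ → ℂ) (f₂ g₂ : ℂ → ℂ → ℂ) (φ₂ : ℂ → ℂ)
    (hfP₁ : IsPolyFun2 f₁)
    (hfH₁ : ∀ lam z w : ℂ, f₁ (lam * z) (lam ^ 2 * w) = lam ^ (m - 1) * f₁ z w)
    (hfD₁ : ∃ fstar : ℂ → ℂ → ℂ, IsPolyFun2 fstar ∧ ∀ z w : ℂ, f₁ z w = z ^ 2 * fstar z w)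
    (hgP₁ : IsPolyFun2 g₁)
    (hgH₁ : ∀ lam z w : ℂ, g₁ (lam * z) (lam ^ 2 * w) = lam ^ m * g₁ z w)
    (hφH₁ : ∀ lam z : ℂ, φ₁ (lam * z) = lam ^ m * φ₁ z)
    (hId₁ : ∀ z : ℂ, g₁ z (z * starRingEnd ℂ z)
        - ((starRingEnd ℂ z * f₁ z (z * starRingEnd ℂ z) + φ₁ z)
           + starRingEnd ℂ (starRingEnd ℂ z * f₁ z (z * starRingEnd ℂ z) + φ₁ z)) = R z)
    (hfP₂ : IsPolyFun2 f₂)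
    (hfH₂ : ∀ lam z w : ℂ, f₂ (lam * z) (lam ^ 2 * w) = lam ^ (m - 1) * f₂ z w)
    (hfD₂ : ∃ fstar : ℂ → ℂ → ℂ, IsPolyFun2 fstar ∧ ∀ z w : ℂ, f₂ z w = z ^ 2 * fstar z w)
    (hgP₂ : IsPolyFun2 g₂)
    (hgH₂ : ∀ lam z w : ℂ, g₂ (lam * z) (lam ^ 2 * w) = lam ^ m * g₂ z w)
    (hφH₂ : ∀ lam z : ℂ, φ₂ (lam * z) = lam ^ m * φ₂ z)
    (hId₂ : ∀ z : ℂ, g₂ z (z * starRingEnd ℂ z)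
        - ((starRingEnd ℂ z * f₂ z (z * starRingEnd ℂ z) + φ₂ z)
           + starRingEnd ℂ (starRingEnd ℂ z * f₂ z (z * starRingEnd ℂ z) + φ₂ z)) = R z) :
    f₁ = f₂ ∧ g₁ = g₂ ∧ φ₁ = φ₂ := by
  -- differences
  have hΔfP : IsPolyFun2 (fun z w => f₁ z w - f₂ z w) := by
    obtain ⟨p₁, hp₁⟩ := hfP₁; obtain ⟨p₂, hp₂⟩ := hfP₂
    exact ⟨p₁ - p₂, fun z w => by rw [map_sub, ← hp₁, ← hp₂]⟩
  have hΔgP : IsPolyFun2 (fun z w => g₁ z w - g₂ z w) := by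
    obtain ⟨p₁, hp₁⟩ := hgP₁; obtain ⟨p₂, hp₂⟩ := hgP₂
    exact ⟨p₁ - p₂, fun z w => by rw [map_sub, ← hp₁, ← hp₂]⟩
  have hΔfH : ∀ lam z w : ℂ, (fun z w => f₁ z w - f₂ z w) (lam * z) (lam ^ 2 * w)
      = lam ^ (m - 1) * (fun z w => f₁ z w - f₂ z w) z w := by
    intro lam z w; simp only []; rw [hfH₁, hfH₂]; ring
  have hΔgH : ∀ lam z w : ℂ, (fun z w => g₁ z w - g₂ z w) (lam * z) (lam ^ 2 * w)
      = lam ^ m * (fun z w => g₁ z w - g₂ z w) z w := by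
    intro lam z w; simp only []; rw [hgH₁, hgH₂]; ring
  have hΔfD : ∃ fstar : ℂ → ℂ → ℂ, IsPolyFun2 fstar ∧
      ∀ z w : ℂ, (fun z w => f₁ z w - f₂ z w) z w = z ^ 2 * fstar z w := by
    obtain ⟨s₁, hs₁P, hs₁⟩ := hfD₁; obtain ⟨s₂, hs₂P, hs₂⟩ := hfD₂
    refine ⟨fun z w => s₁ z w - s₂ z w, ?_, fun z w => by simp only []; rw [hs₁, hs₂]; ring⟩
    obtain ⟨p₁, hp₁⟩ := hs₁P; obtain ⟨p₂, hp₂⟩ := hs₂P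
    exact ⟨p₁ - p₂, fun z w => by rw [map_sub, ← hp₁, ← hp₂]⟩
  obtain ⟨Nf, bf, hbf0, hbfF⟩ := homog_structure (m - 1) hΔfP hΔfH
  obtain ⟨Ng, bg, hbg0, hbgF⟩ := homog_structure m hΔgP hΔgH
  have hbf1 : ∀ j, 2*j + 3 > m → bf j = 0 := fdiv_support hbf0 hbfF hΔfD
  set a : ℂ := φ₁ 1 - φ₂ 1 with ha_def
  have hφ1 : ∀ z : ℂ, φ₁ z = z ^ m * φ₁ 1 := fun z => by
    have := hφH₁ z 1; rwa [mul_one] at this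
  have hφ2 : ∀ z : ℂ, φ₂ z = z ^ m * φ₂ 1 := fun z => by
    have := hφH₂ z 1; rwa [mul_one] at this
  have hφeq : ∀ z : ℂ, φ₁ z - φ₂ z = a * z ^ m := fun z => by
    rw [hφ1 z, hφ2 z, ha_def]; ring
  set K := Nf + Ng + m + 2 with hK
  have hmain : ∀ z : ℂ, ∑ α ∈ range K, ∑ β ∈ range K,
      ((∑ j ∈ range Ng, if m - j = α ∧ j = β then bg j else 0)
        - (∑ j ∈ range Nf, if m - 1 - j = α ∧ j + 1 = β then bf j else 0)
        - (∑ j ∈ range 1, if m = α ∧ 0 = β then a else 0)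
        - (∑ j ∈ range Nf, if j + 1 = α ∧ m - 1 - j = β then (starRingEnd ℂ) (bf j) else 0)
        - (∑ j ∈ range 1, if 0 = α ∧ m = β then (starRingEnd ℂ) a else 0))
        * z ^ α * ((starRingEnd ℂ) z) ^ β = 0 := by
    intro z
    have split : ∀ α β : ℕ, ∀ P1 P2 P3 P4 P5 : ℂ,
        (P1 - P2 - P3 - P4 - P5) * z ^ α * ((starRingEnd ℂ) z) ^ β
        = P1 * z ^ α * ((starRingEnd ℂ) z) ^ β - P2 * z ^ α * ((starRingEnd ℂ) z) ^ β
          - P3 * z ^ α * ((starRingEnd ℂ) z) ^ β - P4 * z ^ α * ((starRingEnd ℂ) z) ^ β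
          - P5 * z ^ α * ((starRingEnd ℂ) z) ^ β := by intro α β P1 P2 P3 P4 P5; ring
    simp only [split]
    simp only [Finset.sum_sub_distrib]
    rw [show (∑ α ∈ range K, ∑ β ∈ range K,
          (∑ j ∈ range Ng, if m - j = α ∧ j = β then bg j else 0)
            * z ^ α * ((starRingEnd ℂ) z) ^ β)
        = ∑ j ∈ range Ng, bg j * z ^ (m - j) * ((starRingEnd ℂ) z) ^ j from
      sumCollapse (range Ng) (fun j => m - j) (fun j => j) bg K
        (fun j hj => by
          rw [Finset.mem_range] at hj
          exact ⟨show m - j < K by omega, show j < K by omega⟩) z ((starRingEnd ℂ) z)]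
    rw [show (∑ α ∈ range K, ∑ β ∈ range K,
          (∑ j ∈ range Nf, if m - 1 - j = α ∧ j + 1 = β then bf j else 0)
            * z ^ α * ((starRingEnd ℂ) z) ^ β)
        = ∑ j ∈ range Nf, bf j * z ^ (m - 1 - j) * ((starRingEnd ℂ) z) ^ (j + 1) from
      sumCollapse (range Nf) (fun j => m - 1 - j) (fun j => j + 1) bf K
        (fun j hj => by
          rw [Finset.mem_range] at hj
          exact ⟨show m - 1 - j < K by omega, show j + 1 < K by omega⟩) z ((starRingEnd ℂ) z)]
    rw [show (∑ α ∈ range K, ∑ β ∈ range K,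
          (∑ j ∈ range 1, if m = α ∧ 0 = β then a else 0)
            * z ^ α * ((starRingEnd ℂ) z) ^ β)
        = ∑ j ∈ range 1, a * z ^ m * ((starRingEnd ℂ) z) ^ 0 from
      sumCollapse (range 1) (fun _ => m) (fun _ => 0) (fun _ => a) K
        (fun j hj => ⟨show m < K by omega, show 0 < K by omega⟩) z ((starRingEnd ℂ) z)]
    rw [show (∑ α ∈ range K, ∑ β ∈ range K,
          (∑ j ∈ range Nf, if j + 1 = α ∧ m - 1 - j = β then (starRingEnd ℂ) (bf j) else 0)
            * z ^ α * ((starRingEnd ℂ) z) ^ β)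
        = ∑ j ∈ range Nf, (starRingEnd ℂ) (bf j) * z ^ (j + 1) * ((starRingEnd ℂ) z) ^ (m - 1 - j) from
      sumCollapse (range Nf) (fun j => j + 1) (fun j => m - 1 - j) (fun j => (starRingEnd ℂ) (bf j)) K
        (fun j hj => by
          rw [Finset.mem_range] at hj
          exact ⟨show j + 1 < K by omega, show m - 1 - j < K by omega⟩) z ((starRingEnd ℂ) z)]
    rw [show (∑ α ∈ range K, ∑ β ∈ range K,
          (∑ j ∈ range 1, if 0 = α ∧ m = β then (starRingEnd ℂ) a else 0)
            * z ^ α * ((starRingEnd ℂ) z) ^ β)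
        = ∑ j ∈ range 1, (starRingEnd ℂ) a * z ^ 0 * ((starRingEnd ℂ) z) ^ m from
      sumCollapse (range 1) (fun _ => 0) (fun _ => m) (fun _ => (starRingEnd ℂ) a) K
        (fun j hj => ⟨show 0 < K by omega, show m < K by omega⟩) z ((starRingEnd ℂ) z)]
    rw [Finset.sum_range_one, Finset.sum_range_one]
    -- identify the pieces
    have c1 : (∑ j ∈ range Ng, bg j * z ^ (m - j) * ((starRingEnd ℂ) z) ^ j)
        = g₁ z (z * (starRingEnd ℂ) z) - g₂ z (z * (starRingEnd ℂ) z) := by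
      have hgg := hbgF z (z * (starRingEnd ℂ) z)
      rw [hgg]
      refine Finset.sum_congr rfl fun j _ => ?_
      by_cases hbj : bg j = 0
      · rw [hbj]; ring
      · have h2j : 2*j ≤ m := by
          by_contra hc; exact hbj (hbg0 j (Or.inl (by omega)))
        refine Eq.symm ?_
        calc bg j * z ^ (m - 2*j) * (z * (starRingEnd ℂ) z) ^ j
            = bg j * (z ^ (m - 2*j) * z ^ j) * ((starRingEnd ℂ) z) ^ j := by
              rw [mul_pow]; ring
          _ = bg j * z ^ (m - j) * ((starRingEnd ℂ) z) ^ j := by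
              rw [← pow_add, show m - 2*j + j = m - j by omega]
    have c2 : (∑ j ∈ range Nf, bf j * z ^ (m - 1 - j) * ((starRingEnd ℂ) z) ^ (j + 1))
        = (starRingEnd ℂ) z * f₁ z (z * (starRingEnd ℂ) z)
          - (starRingEnd ℂ) z * f₂ z (z * (starRingEnd ℂ) z) := by
      have hff := hbfF z (z * (starRingEnd ℂ) z)
      rw [show (starRingEnd ℂ) z * f₁ z (z * (starRingEnd ℂ) z)
          - (starRingEnd ℂ) z * f₂ z (z * (starRingEnd ℂ) z)
          = (starRingEnd ℂ) z * (f₁ z (z * (starRingEnd ℂ) z) - f₂ z (z * (starRingEnd ℂ) z)) by ring]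
      rw [hff, Finset.mul_sum]
      refine Finset.sum_congr rfl fun j _ => ?_
      by_cases hbj : bf j = 0
      · rw [hbj]; ring
      · have h2j : 2*j ≤ m - 1 := by
          by_contra hc; exact hbj (hbf0 j (Or.inl (by omega)))
        refine Eq.symm ?_
        calc (starRingEnd ℂ) z * (bf j * z ^ (m - 1 - 2*j) * (z * (starRingEnd ℂ) z) ^ j)
            = bf j * (z ^ (m - 1 - 2*j) * z ^ j) * (((starRingEnd ℂ) z) ^ j * (starRingEnd ℂ) z) := by
              rw [mul_pow]; ring
          _ = bf j * z ^ (m - 1 - j) * ((starRingEnd ℂ) z) ^ (j + 1) := by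
              rw [← pow_add, show m - 1 - 2*j + j = m - 1 - j by omega, ← pow_succ]
    have c4 : (∑ j ∈ range Nf, (starRingEnd ℂ) (bf j) * z ^ (j + 1) * ((starRingEnd ℂ) z) ^ (m - 1 - j))
        = (starRingEnd ℂ) ((starRingEnd ℂ) z * f₁ z (z * (starRingEnd ℂ) z))
          - (starRingEnd ℂ) ((starRingEnd ℂ) z * f₂ z (z * (starRingEnd ℂ) z)) := by
      rw [← map_sub, show (starRingEnd ℂ) z * f₁ z (z * (starRingEnd ℂ) z)
          - (starRingEnd ℂ) z * f₂ z (z * (starRingEnd ℂ) z)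
          = ∑ j ∈ range Nf, bf j * z ^ (m - 1 - j) * ((starRingEnd ℂ) z) ^ (j + 1) from c2.symm]
      rw [map_sum]
      refine Finset.sum_congr rfl fun j _ => ?_
      rw [map_mul, map_mul, map_pow, map_pow, Complex.conj_conj]
      ring
    have c3 : a * z ^ m * ((starRingEnd ℂ) z) ^ 0 = φ₁ z - φ₂ z := by
      rw [pow_zero, mul_one, hφeq z]
    have c5 : (starRingEnd ℂ) a * z ^ 0 * ((starRingEnd ℂ) z) ^ m
        = (starRingEnd ℂ) (φ₁ z) - (starRingEnd ℂ) (φ₂ z) := by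
      rw [← map_sub, hφeq z, map_mul, map_pow, pow_zero]; ring
    rw [c1, c2, c3, c4, c5]
    have e₁ := hId₁ z
    have e₂ := hId₂ z
    rw [map_add] at e₁ e₂
    linear_combination e₁ - e₂
  have hvan := vanish_conj K _ hmain
  -- decode: bf j = 0 for small j
  have bf_small : ∀ j, 2*j + 3 ≤ m → bf j = 0 := by
    intro j hj
    have hv := hvan (j+1) (by omega) (m-1-j) (by omega)
    rw [show (∑ j' ∈ range Ng, if m - j' = j+1 ∧ j' = m-1-j then bg j' else 0) = 0 from
      Finset.sum_eq_zero fun j' _ => by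
        split_ifs with hc
        · exact hbg0 j' (Or.inl (by omega))
        · rfl] at hv
    rw [show (∑ j' ∈ range Nf, if m - 1 - j' = j+1 ∧ j' + 1 = m-1-j then bf j' else 0) = 0 from
      Finset.sum_eq_zero fun j' _ => by
        split_ifs with hc
        · exact hbf1 j' (by omega)
        · rfl] at hv
    rw [Finset.sum_range_one, Finset.sum_range_one, if_neg (by omega)] at hv
    rw [if_neg (show ¬((0:ℕ) = j+1 ∧ m = m-1-j) by omega)] at hv
    rw [Finset.sum_eq_single j] at hv
    · rw [if_pos ⟨rfl, rfl⟩] at hv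
      have h0 : (starRingEnd ℂ) (bf j) = 0 := by linear_combination -hv
      rw [← Complex.conj_conj (bf j), h0, map_zero]
    · intro j' _ hne
      exact if_neg (by rintro ⟨h1, h2⟩; exact hne (by omega))
    · intro hmem
      rw [Finset.mem_range, not_lt] at hmem
      rw [hbf0 j (Or.inr hmem), map_zero, if_pos ⟨rfl, rfl⟩]
  have bf_all : ∀ j, bf j = 0 := by
    intro j
    by_cases hj : 2*j + 3 ≤ m
    · exact bf_small j hj
    · exact hbf1 j (by omega)
  -- decode: a = 0
  have ha : a = 0 := by
    have hv := hvan 0 (by omega) m (by omega)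
    rw [show (∑ j' ∈ range Ng, if m - j' = 0 ∧ j' = m then bg j' else 0) = 0 from
      Finset.sum_eq_zero fun j' _ => by
        split_ifs with hc
        · exact hbg0 j' (Or.inl (by omega))
        · rfl] at hv
    rw [show (∑ j' ∈ range Nf, if m - 1 - j' = 0 ∧ j' + 1 = m then bf j' else 0) = 0 from
      Finset.sum_eq_zero fun j' _ => by rw [bf_all j']; split_ifs <;> rfl] at hv
    rw [show (∑ j' ∈ range Nf, if j' + 1 = 0 ∧ m - 1 - j' = m then (starRingEnd ℂ) (bf j') else 0) = 0 from
      Finset.sum_eq_zero fun j' _ => by rw [bf_all j', map_zero]; split_ifs <;> rfl] at hv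
    rw [Finset.sum_range_one, Finset.sum_range_one, if_neg (by omega),
      if_pos ⟨rfl, rfl⟩] at hv
    have h0 : (starRingEnd ℂ) a = 0 := by linear_combination -hv
    rw [← Complex.conj_conj a, h0, map_zero]
  -- decode: bg j = 0
  have bg_all : ∀ j, bg j = 0 := by
    intro j
    by_cases h2 : 2*j ≤ m
    case neg => exact hbg0 j (Or.inl (by omega))
    have hv := hvan (m-j) (by omega) j (by omega)
    rw [show (∑ j' ∈ range Nf, if m - 1 - j' = m-j ∧ j' + 1 = j then bf j' else 0) = 0 from
      Finset.sum_eq_zero fun j' _ => by rw [bf_all j']; split_ifs <;> rfl] at hv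
    rw [show (∑ j' ∈ range Nf, if j' + 1 = m-j ∧ m - 1 - j' = j then (starRingEnd ℂ) (bf j') else 0) = 0 from
      Finset.sum_eq_zero fun j' _ => by rw [bf_all j', map_zero]; split_ifs <;> rfl] at hv
    rw [Finset.sum_range_one, Finset.sum_range_one] at hv
    rw [show (if m = m-j ∧ (0:ℕ) = j then a else 0) = 0 by rw [ha]; split_ifs <;> rfl] at hv
    rw [if_neg (show ¬((0:ℕ) = m-j ∧ m = j) by omega)] at hv
    rw [Finset.sum_eq_single j] at hv
    · rw [if_pos ⟨rfl, rfl⟩] at hv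
      linear_combination hv
    · intro j' _ hne
      exact if_neg (by rintro ⟨h1, h2⟩; exact hne h2)
    · intro hmem
      rw [Finset.mem_range, not_lt] at hmem
      rw [hbg0 j (Or.inr hmem), if_pos ⟨rfl, rfl⟩]
  refine ⟨?_, ?_, ?_⟩
  · funext z w
    have h := hbfF z w
    simp only [bf_all, zero_mul, Finset.sum_const_zero] at h
    exact sub_eq_zero.mp h
  · funext z w
    have h := hbgF z w
    simp only [bg_all, zero_mul, Finset.sum_const_zero] at h
    exact sub_eq_zero.mp h
  · funext z
    have h := hφeq z
    rw [ha, zero_mul] at h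
    exact sub_eq_zero.mp h

noncomputable def fsol (m : ℕ) (c : ℕ → ℕ → ℂ) : ℂ → ℂ → ℂ := fun z w =>
  -∑ j ∈ range m, if 2*j+3 ≤ m then c (m - (j+1)) (j+1) * z ^ (m - (2*j+1)) * w ^ j else 0

noncomputable def gsol (m : ℕ) (c : ℕ → ℕ → ℂ) : ℂ → ℂ → ℂ := fun _ w =>
  (if m % 2 = 0 then c (m/2) (m/2) else 0) * w ^ (m/2)

noncomputable def phisol (m : ℕ) (c : ℕ → ℕ → ℂ) : ℂ → ℂ := fun z =>
  -(c m 0 * z ^ m)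

lemma fsol_poly (m : ℕ) (c : ℕ → ℕ → ℂ) : IsPolyFun2 (fsol m c) := by
  refine ⟨-∑ j ∈ range m, if 2*j+3 ≤ m then
    MvPolynomial.C (c (m - (j+1)) (j+1)) * MvPolynomial.X 0 ^ (m - (2*j+1))
      * MvPolynomial.X 1 ^ j else 0, fun z w => ?_⟩
  rw [fsol, map_neg, map_sum]
  congr 1
  refine Finset.sum_congr rfl fun j _ => ?_
  split_ifs
  · simp
  · simp

lemma gsol_poly (m : ℕ) (c : ℕ → ℕ → ℂ) : IsPolyFun2 (gsol m c) := by
  refine ⟨(if m % 2 = 0 then MvPolynomial.C (c (m/2) (m/2)) else 0)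
    * MvPolynomial.X 1 ^ (m/2), fun z w => ?_⟩
  rw [gsol, map_mul, map_pow]
  split_ifs <;> simp

lemma phisol_poly (m : ℕ) (c : ℕ → ℕ → ℂ) : IsPolyFun1 (phisol m c) := by
  refine ⟨-(Polynomial.C (c m 0) * Polynomial.X ^ m), fun z => ?_⟩
  simp [phisol]

lemma fsol_homog (m : ℕ) (c : ℕ → ℕ → ℂ) :
    ∀ lam z w : ℂ, fsol m c (lam * z) (lam ^ 2 * w) = lam ^ (m - 1) * fsol m c z w := by
  intro lam z w
  rw [fsol, fsol]
  rw [mul_neg, neg_inj, Finset.mul_sum]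
  refine Finset.sum_congr rfl fun j _ => ?_
  split_ifs with h
  · calc c (m - (j+1)) (j+1) * (lam*z)^(m-(2*j+1)) * (lam^2*w)^j
        = (lam^(m-(2*j+1)) * lam^(2*j)) * (c (m - (j+1)) (j+1) * z^(m-(2*j+1)) * w^j) := by
          rw [mul_pow, mul_pow, ← pow_mul]; ring
      _ = lam^(m-1) * (c (m - (j+1)) (j+1) * z^(m-(2*j+1)) * w^j) := by
          rw [← pow_add, show m-(2*j+1)+2*j = m-1 by omega]
  · rw [mul_zero]

lemma gsol_homog (m : ℕ) (c : ℕ → ℕ → ℂ) :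
    ∀ lam z w : ℂ, gsol m c (lam * z) (lam ^ 2 * w) = lam ^ m * gsol m c z w := by
  intro lam z w
  rw [gsol, gsol]
  by_cases h : m % 2 = 0
  · rw [if_pos h, mul_pow, ← pow_mul, show 2 * (m/2) = m by omega]
    ring
  · rw [if_neg h, zero_mul, zero_mul, mul_zero]

lemma phisol_homog (m : ℕ) (c : ℕ → ℕ → ℂ) :
    ∀ lam z : ℂ, phisol m c (lam * z) = lam ^ m * phisol m c z := by
  intro lam z
  rw [phisol, phisol, mul_pow]
  ring

lemma fsol_div (m : ℕ) (hm : 4 ≤ m) (c : ℕ → ℕ → ℂ) :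
    ∃ fstar : ℂ → ℂ → ℂ, IsPolyFun2 fstar ∧ ∀ z w : ℂ, fsol m c z w = z ^ 2 * fstar z w := by
  refine ⟨fun z w => -∑ j ∈ range m, if 2*j+3 ≤ m then
      c (m - (j+1)) (j+1) * z ^ (m - (2*j+3)) * w ^ j else 0, ?_, ?_⟩
  · refine ⟨-∑ j ∈ range m, if 2*j+3 ≤ m then
      MvPolynomial.C (c (m - (j+1)) (j+1)) * MvPolynomial.X 0 ^ (m - (2*j+3))
        * MvPolynomial.X 1 ^ j else 0, fun z w => ?_⟩
    show -∑ j ∈ range m, (if 2*j+3 ≤ m then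
      c (m - (j+1)) (j+1) * z ^ (m - (2*j+3)) * w ^ j else 0) = _
    rw [map_neg, map_sum]
    congr 1
    refine Finset.sum_congr rfl fun j _ => ?_
    split_ifs
    · simp
    · simp
  · intro z w
    rw [fsol]
    rw [mul_neg, neg_inj, Finset.mul_sum]
    refine Finset.sum_congr rfl fun j _ => ?_
    split_ifs with h
    · rw [show m - (2*j+1) = 2 + (m - (2*j+3)) by omega, pow_add]
      ring
    · rw [mul_zero]

lemma sol_identity (m : ℕ) (hm : 4 ≤ m) (c : ℕ → ℕ → ℂ)
    (hsupp : ∀ α β : ℕ, c α β ≠ 0 → α + β = m)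
    (hreal : ∀ α β : ℕ, c β α = starRingEnd ℂ (c α β)) :
    ∀ z : ℂ, gsol m c z (z * starRingEnd ℂ z)
      - ((starRingEnd ℂ z * fsol m c z (z * starRingEnd ℂ z) + phisol m c z)
         + starRingEnd ℂ (starRingEnd ℂ z * fsol m c z (z * starRingEnd ℂ z) + phisol m c z))
      = ∑ α ∈ range (m + 1), ∑ β ∈ range (m + 1),
          c α β * z ^ α * (starRingEnd ℂ z) ^ β := by
  intro z
  set zb := starRingEnd ℂ z with hzb
  have hpeel_first : ∀ F : ℕ → ℂ, ∑ j ∈ range m, F j = (∑ j ∈ range (m-1), F (j+1)) + F 0 := by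
    intro F
    rw [show m = (m-1)+1 by omega, Finset.sum_range_succ']
    congr 2 <;> omega
  have hpeel_last : ∀ F : ℕ → ℂ, ∑ j ∈ range m, F j = (∑ j ∈ range (m-1), F j) + F (m-1) := by
    intro F
    rw [show m = (m-1)+1 by omega, Finset.sum_range_succ]
    congr 2 <;> omega
  -- the five pieces
  have hA : zb * fsol m c z (z * zb)
      = -∑ j ∈ range m, (if 2*j+3 ≤ m then c (m-(j+1)) (j+1) * z^(m-(j+1)) * zb^(j+1) else 0) := by
    rw [fsol]
    rw [mul_neg, neg_inj, Finset.mul_sum]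
    refine Finset.sum_congr rfl fun j _ => ?_
    split_ifs with h
    · calc zb * (c (m-(j+1)) (j+1) * z^(m-(2*j+1)) * (z*zb)^j)
          = c (m-(j+1)) (j+1) * (z^(m-(2*j+1)) * z^j) * (zb^j * zb) := by
            rw [mul_pow]; ring
        _ = c (m-(j+1)) (j+1) * z^(m-(j+1)) * zb^(j+1) := by
            rw [← pow_add, show m-(2*j+1)+j = m-(j+1) by omega, ← pow_succ]
    · rw [mul_zero]
  have hB : gsol m c z (z * zb)
      = ∑ j ∈ range m, (if 2*j+2 = m then c (m-(j+1)) (j+1) * z^(m-(j+1)) * zb^(j+1) else 0) := by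
    rw [gsol]
    by_cases h : m % 2 = 0
    · rw [Finset.sum_eq_single_of_mem (m/2 - 1) (Finset.mem_range.mpr (by omega))]
      · rw [if_pos h, if_pos (show 2*(m/2-1)+2 = m by omega), show m/2-1+1 = m/2 by omega,
          show m - m/2 = m/2 by omega, mul_pow, mul_assoc]
      · intro j _ hne
        exact if_neg (by omega)
    · rw [if_neg h, zero_mul]
      exact (Finset.sum_eq_zero fun j _ => if_neg (by omega)).symm
  have hφval : phisol m c z = -(c m 0 * z^m) := by rw [phisol]
  have hCval : starRingEnd ℂ (zb * fsol m c z (z * zb))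
      = -∑ j ∈ range m, (if 2*j+3 ≤ m then c (j+1) (m-(j+1)) * z^(j+1) * zb^(m-(j+1)) else 0) := by
    rw [hA, map_neg, map_sum, neg_inj]
    refine Finset.sum_congr rfl fun j _ => ?_
    rw [apply_ite (starRingEnd ℂ), map_zero, map_mul, map_mul, map_pow, map_pow]
    rw [← hreal, hzb, Complex.conj_conj]
    split_ifs <;> ring
  have hφcval : starRingEnd ℂ (phisol m c z) = -(c 0 m * zb^m) := by
    rw [hφval, map_neg, map_mul, map_pow, ← hreal, hzb]
  -- the RHS
  have hRHS : ∑ α ∈ range (m + 1), ∑ β ∈ range (m + 1), c α β * z ^ α * zb ^ β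
      = (∑ j ∈ range m, (if 2*j+3 ≤ m then c (m-(j+1)) (j+1) * z^(m-(j+1)) * zb^(j+1) else 0))
        + (∑ j ∈ range m, (if 2*j+2 = m then c (m-(j+1)) (j+1) * z^(m-(j+1)) * zb^(j+1) else 0))
        + ((∑ j ∈ range m, (if 2*j+3 ≤ m then c (j+1) (m-(j+1)) * z^(j+1) * zb^(m-(j+1)) else 0))
            + c 0 m * zb^m)
        + c m 0 * z^m := by
    calc ∑ α ∈ range (m + 1), ∑ β ∈ range (m + 1), c α β * z ^ α * zb ^ β
        = ∑ β ∈ range (m+1), c (m-β) β * z^(m-β) * zb^β := by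
          rw [Finset.sum_comm]
          refine Finset.sum_congr rfl fun β hβ => ?_
          rw [Finset.mem_range] at hβ
          rw [Finset.sum_eq_single_of_mem (m-β) (Finset.mem_range.mpr (by omega))]
          intro α _ hne
          rcases eq_or_ne (c α β) 0 with h0 | h0
          · rw [h0]; ring
          · exact absurd (hsupp α β h0) (by omega)
      _ = (∑ j ∈ range m, c (m-(j+1)) (j+1) * z^(m-(j+1)) * zb^(j+1)) + c m 0 * z^m := by
          rw [Finset.sum_range_succ']
          congr 1
          rw [Nat.sub_zero, pow_zero, mul_one]
      _ = (∑ j ∈ range m, ((if 2*j+3 ≤ m then c (m-(j+1)) (j+1) * z^(m-(j+1)) * zb^(j+1) else 0)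
            + (if 2*j+2 = m then c (m-(j+1)) (j+1) * z^(m-(j+1)) * zb^(j+1) else 0)
            + (if m ≤ 2*j+1 then c (m-(j+1)) (j+1) * z^(m-(j+1)) * zb^(j+1) else 0)))
            + c m 0 * z^m := by
          congr 1
          refine Finset.sum_congr rfl fun j _ => ?_
          split_ifs <;> first | ring1 | (exfalso; omega)
      _ = ((∑ j ∈ range m, (if 2*j+3 ≤ m then c (m-(j+1)) (j+1) * z^(m-(j+1)) * zb^(j+1) else 0))
            + (∑ j ∈ range m, (if 2*j+2 = m then c (m-(j+1)) (j+1) * z^(m-(j+1)) * zb^(j+1) else 0))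
            + (∑ j ∈ range m, (if m ≤ 2*j+1 then c (m-(j+1)) (j+1) * z^(m-(j+1)) * zb^(j+1) else 0)))
            + c m 0 * z^m := by
          rw [Finset.sum_add_distrib, Finset.sum_add_distrib]
      _ = (∑ j ∈ range m, (if 2*j+3 ≤ m then c (m-(j+1)) (j+1) * z^(m-(j+1)) * zb^(j+1) else 0))
            + (∑ j ∈ range m, (if 2*j+2 = m then c (m-(j+1)) (j+1) * z^(m-(j+1)) * zb^(j+1) else 0))
            + ((∑ j ∈ range m, (if 2*j+3 ≤ m then c (j+1) (m-(j+1)) * z^(j+1) * zb^(m-(j+1)) else 0))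
                + c 0 m * zb^m)
            + c m 0 * z^m := by
          congr 2
          -- the C part
          rw [hpeel_last (fun j => if m ≤ 2*j+1 then c (m-(j+1)) (j+1) * z^(m-(j+1)) * zb^(j+1) else 0)]
          rw [hpeel_last (fun j => if 2*j+3 ≤ m then c (j+1) (m-(j+1)) * z^(j+1) * zb^(m-(j+1)) else 0)]
          rw [if_neg (show ¬(2*(m-1)+3 ≤ m) by omega), add_zero]
          congr 1
          · rw [← Finset.sum_range_reflect]
            refine Finset.sum_congr rfl fun j hj => ?_
            rw [Finset.mem_range] at hj
            rw [show m-1-1-j = m-2-j by omega]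
            by_cases hc : 2*j+3 ≤ m
            · rw [if_pos (by omega), if_pos hc, show (m-2-j)+1 = m-(j+1) by omega,
                show m-(m-(j+1)) = j+1 by omega]
            · rw [if_neg (by omega), if_neg hc]
          · rw [if_pos (by omega), show (m-1)+1 = m by omega, Nat.sub_self, pow_zero, mul_one]
  rw [map_add, hCval, hφcval, hA, hB, hφval, hRHS]
  ring

theorem moser_operator_unique_solvability
    (m : ℕ) (hm : 4 ≤ m) (c : ℕ → ℕ → ℂ)
    (hsupp : ∀ α β : ℕ, c α β ≠ 0 → α + β = m)
    (hreal : ∀ α β : ℕ, c β α = starRingEnd ℂ (c α β)) :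
    ∃! fgφ : (ℂ → ℂ → ℂ) × (ℂ → ℂ → ℂ) × (ℂ → ℂ),
      IsPolyFun2 fgφ.1
      ∧ (∀ lam z w : ℂ, fgφ.1 (lam * z) (lam ^ 2 * w) = lam ^ (m - 1) * fgφ.1 z w)
      ∧ (∃ fstar : ℂ → ℂ → ℂ, IsPolyFun2 fstar ∧ ∀ z w : ℂ, fgφ.1 z w = z ^ 2 * fstar z w)
      ∧ IsPolyFun2 fgφ.2.1
      ∧ (∀ lam z w : ℂ, fgφ.2.1 (lam * z) (lam ^ 2 * w) = lam ^ m * fgφ.2.1 z w)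
      ∧ IsPolyFun1 fgφ.2.2
      ∧ (∀ lam z : ℂ, fgφ.2.2 (lam * z) = lam ^ m * fgφ.2.2 z)
      ∧ (∀ z : ℂ,
          fgφ.2.1 z (z * starRingEnd ℂ z)
            - ((starRingEnd ℂ z * fgφ.1 z (z * starRingEnd ℂ z) + fgφ.2.2 z)
               + starRingEnd ℂ (starRingEnd ℂ z * fgφ.1 z (z * starRingEnd ℂ z) + fgφ.2.2 z))
          = ∑ α ∈ range (m + 1), ∑ β ∈ range (m + 1),
              c α β * z ^ α * (starRingEnd ℂ z) ^ β) := by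
  refine ⟨⟨fsol m c, gsol m c, phisol m c⟩,
    ⟨fsol_poly m c, fsol_homog m c, fsol_div m hm c, gsol_poly m c, gsol_homog m c,
      phisol_poly m c, phisol_homog m c, sol_identity m hm c hsupp hreal⟩, ?_⟩
  rintro ⟨f, g, φ⟩ ⟨h1, h2, h3, h4, h5, h6, h7, h8⟩
  obtain ⟨hf, hg, hφ⟩ := moser_uniq m hm
    (fun z => ∑ α ∈ range (m + 1), ∑ β ∈ range (m + 1),
        c α β * z ^ α * (starRingEnd ℂ z) ^ β)
    f g φ (fsol m c) (gsol m c) (phisol m c)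
    h1 h2 h3 h4 h5 h7 h8
    (fsol_poly m c) (fsol_homog m c) (fsol_div m hm c) (gsol_poly m c) (gsol_homog m c)
    (phisol_homog m c) (sol_identity m hm c hsupp hreal)
  rw [Prod.ext_iff, Prod.ext_iff]
  exact ⟨hf, hg, hφ⟩
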